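/- For the A_{n−1}^(1) case with B = B^{1,l}⊗B^{1,m} (l ≥ m), if p is a highest weight path in P(p^{(λ,μ)}, B) with p(j) = (a_i^{(j)})⊗(b_i^{(j)}), then for all i,j: a_{i−1}^{(j)} ≥ b_i^{(j)} and a_{i−1}^{(j)} + b_{i−1}^{(j)} − b_i^{(j)} = a_i^{(j−1)}, i.e., φ_i(p(j)) = ε_i(p(j−1)). -/

import Mathlib

/-- Iterated application of a partial (crystal) operator. -/
def iterOpt {B : Type*} (g : B → Option B) : ℕ → B → Option B
  | 0, b => some b
  | n + 1, b => (g b).bind (iterOpt g n)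

/-- Tensor product rule for `ẽ`: acts on the left factor iff `φ(b1) ≥ ε(b2)`. -/
def tensE {B1 B2 : Type*} (e1 : B1 → Option B1) (e2 : B2 → Option B2)
    (φ1 : B1 → ℕ) (ε2 : B2 → ℕ) (p : B1 × B2) : Option (B1 × B2) :=
  if ε2 p.2 ≤ φ1 p.1 then (e1 p.1).map (fun b => (b, p.2))
  else (e2 p.2).map (fun b => (p.1, b))

/-- Tensor product rule for `f̃`: acts on the left factor iff `φ(b1) > ε(b2)`. -/
def tensF {B1 B2 : Type*} (f1 : B1 → Option B1) (f2 : B2 → Option B2)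
    (φ1 : B1 → ℕ) (ε2 : B2 → ℕ) (p : B1 × B2) : Option (B1 × B2) :=
  if ε2 p.2 < φ1 p.1 then (f1 p.1).map (fun b => (b, p.2))
  else (f2 p.2).map (fun b => (p.1, b))


/-- The operator `ẽ_r` on the `A_{n−1}^{(1)}` crystal `B^{1,l}`. -/
def erA (n : ℕ) [NeZero n] (r : Fin n) (b : Fin n → ℕ) : Option (Fin n → ℕ) :=
  if b r = 0 then none
  else some (fun i => if i = r then b i - 1 else if i = r - 1 then b i + 1 else b i)

open Fin.NatCast in
/-- The reference path `p^{(λ,μ)}(j) = (λ_{i+j} + μ_{i+2j}) ⊗ (μ_{i+2j−1})`. -/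
def prefA (n : ℕ) [NeZero n] (lam mu : Fin n → ℕ) (j : ℕ) :
    (Fin n → ℕ) × (Fin n → ℕ) :=
  (fun i => lam (i + (j : Fin n)) + mu (i + ((2 * j : ℕ) : Fin n)),
   fun i => mu (i + ((2 * j : ℕ) : Fin n) - 1))

/-- `ε_r` of the tail of a path, via the tensor product rule. -/
def epsTail {B : Type*} (ε φ : B → ℕ) (p : ℕ → B) : ℕ → ℕ
  | 0 => 0
  | k + 1 => max (ε (p k)) (ε (p k) + epsTail ε φ p k - φ (p k))

/-- One application of `ẽ` to a semi-infinite path (`p j` is the `(j+1)`-st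
factor from the right); `ẽ p = 0` iff no `q` with `EStep … p q` exists. -/
def EStep {B : Type*} (e : B → Option B) (ε φ : B → ℕ) (p q : ℕ → B) : Prop :=
  ∃ j, epsTail ε φ p j ≤ φ (p j) ∧ (∀ k, j < k → φ (p k) < epsTail ε φ p k) ∧
    e (p j) = some (q j) ∧ ∀ k, k ≠ j → q k = p k

/-!
Downward induction on `j`, starting far out where `p` is the reference path and both claims are
read off its coordinates. Suppose `p(k) ∈ B_min` and `φ(p(k+1)) = ε(p(k))` for all `k > j`. Then
`ε_r` of the tail minus `φ_r(p(k))` is constant for `k > j`; were it positive, `ẽ_r` would act at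
some factor `p(j₀)` with `ε_r(p(j₀)) = 0`, contradicting the highest weight property. Hence
`ε_r(p(j)) ≤ φ_r(p(j+1))` for every `r`. Summing over `r`, the left side is at least `l` and the
right side equals `l` because `p(j+1) ∈ B_min`, so all these inequalities are equalities, which
says exactly that `p(j) ∈ B_min` and `φ(p(j+1)) = ε(p(j))`.
-/

open Finset

section SemiInfinitePath

variable {B : Type*} (e : B → Option B) (ε φ : B → ℕ) (p : ℕ → B)

theorem epsTail_succ (k : ℕ) :
    epsTail ε φ p (k + 1) = ε (p k) + (epsTail ε φ p k - φ (p k)) := by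
  rw [epsTail]
  omega

theorem epsTail_sub_phi_eq_of_lt {j : ℕ} (hphi : ∀ k, j < k → φ (p (k + 1)) = ε (p k))
    {k : ℕ} (hk : j < k) :
    epsTail ε φ p k - φ (p k) = epsTail ε φ p (j + 1) - φ (p (j + 1)) := by
  induction k, hk using Nat.le_induction with
  | base => rfl
  | succ k hk ih =>
    rw [epsTail_succ, hphi k hk, ← ih]
    omega

theorem exists_eStep_position {j : ℕ} (hpos : ∀ k, j < k → φ (p k) < epsTail ε φ p k) :
    ∃ j₀, epsTail ε φ p j₀ ≤ φ (p j₀) ∧ ∀ k, j₀ < k → φ (p k) < epsTail ε φ p k := by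
  induction j with
  | zero => exact ⟨0, Nat.zero_le _, hpos⟩
  | succ j ih =>
    by_cases h : epsTail ε φ p (j + 1) ≤ φ (p (j + 1))
    · exact ⟨j + 1, h, hpos⟩
    · refine ih fun k hk => ?_
      rcases (Nat.succ_le_of_lt hk).eq_or_lt with rfl | hk
      · exact Nat.lt_of_not_le h
      · exact hpos k hk

variable {e ε φ p}

theorem eq_none_of_not_exists_eStep (hhw : ¬ ∃ q, EStep e ε φ p q) {j₀ : ℕ}
    (hle : epsTail ε φ p j₀ ≤ φ (p j₀)) (hlt : ∀ k, j₀ < k → φ (p k) < epsTail ε φ p k) :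
    e (p j₀) = none := by
  rw [Option.eq_none_iff_forall_ne_some]
  intro x hx
  exact hhw ⟨Function.update p j₀ x, j₀, hle, hlt, by simpa using hx,
    fun k hk => Function.update_of_ne hk _ _⟩

theorem eps_le_phi_succ_of_not_exists_eStep (he : ∀ b, e b = none → ε b = 0)
    (hhw : ¬ ∃ q, EStep e ε φ p q) {j : ℕ} (hphi : ∀ k, j < k → φ (p (k + 1)) = ε (p k)) :
    ε (p j) ≤ φ (p (j + 1)) := by
  by_contra! hgt
  have hpos : ∀ k, j < k → φ (p k) < epsTail ε φ p k := by
    intro k hk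
    have := epsTail_sub_phi_eq_of_lt ε φ p hphi hk
    have := epsTail_succ ε φ p j
    omega
  obtain ⟨j₀, hle, hlt⟩ := exists_eStep_position ε φ p hpos
  have hε : ε (p j₀) = 0 := he _ (eq_none_of_not_exists_eStep hhw hle hlt)
  have := hlt (j₀ + 1) j₀.lt_succ_self
  rw [epsTail_succ, hε] at this
  omega

end SemiInfinitePath

section TypeA

variable {n : ℕ} [NeZero n]

/-- `ε_r` of `(a) ⊗ (b) ∈ B^{1,l} ⊗ B^{1,m}`. -/
def tensEps (r : Fin n) (x : (Fin n → ℕ) × (Fin n → ℕ)) : ℕ :=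
  max (x.1 r) (x.1 r + x.2 r - x.1 (r - 1))

/-- `φ_r` of `(a) ⊗ (b) ∈ B^{1,l} ⊗ B^{1,m}`. -/
def tensPhi (r : Fin n) (x : (Fin n → ℕ) × (Fin n → ℕ)) : ℕ :=
  max (x.2 (r - 1)) (x.1 (r - 1) + x.2 (r - 1) - x.2 r)

def tensErA (r : Fin n) : (Fin n → ℕ) × (Fin n → ℕ) → Option ((Fin n → ℕ) × (Fin n → ℕ)) :=
  tensE (erA n r) (erA n r) (fun x => x (r - 1)) (fun y => y r)

/-- `(a) ⊗ (b) ∈ B_min`: `φ_i((a)) ≥ ε_i((b))` for all `i`. -/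
def InBmin (x : (Fin n → ℕ) × (Fin n → ℕ)) : Prop :=
  ∀ i, x.2 i ≤ x.1 (i - 1)

theorem tensEps_eq_zero_of_tensErA_eq_none {r : Fin n} {x : (Fin n → ℕ) × (Fin n → ℕ)}
    (h : tensErA r x = none) : tensEps r x = 0 := by
  unfold tensErA tensE erA at h
  unfold tensEps
  split_ifs at h <;> simp_all

theorem le_tensEps (r : Fin n) (x : (Fin n → ℕ) × (Fin n → ℕ)) : x.1 r ≤ tensEps r x :=
  le_max_left _ _

theorem tensEps_of_inBmin {x : (Fin n → ℕ) × (Fin n → ℕ)} (hx : InBmin x) (r : Fin n) :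
    tensEps r x = x.1 r := by
  have := hx r
  unfold tensEps
  omega

theorem tensPhi_of_inBmin {x : (Fin n → ℕ) × (Fin n → ℕ)} (hx : InBmin x) (r : Fin n) :
    tensPhi r x = x.1 (r - 1) + x.2 (r - 1) - x.2 r := by
  have := hx r
  unfold tensPhi
  omega

theorem inBmin_of_tensEps_eq {x : (Fin n → ℕ) × (Fin n → ℕ)} (hx : ∀ r, tensEps r x = x.1 r) :
    InBmin x := by
  intro r
  have := hx r
  unfold tensEps at this
  omega

theorem sum_tensPhi_of_inBmin {x : (Fin n → ℕ) × (Fin n → ℕ)} (hx : InBmin x) :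
    ∑ r, tensPhi r x = ∑ i, x.1 i := by
  have hshift (f : Fin n → ℕ) : ∑ r, f (r - 1) = ∑ i, f i :=
    (Equiv.subRight (1 : Fin n)).sum_comp f
  have h : ∑ r, tensPhi r x + ∑ r, x.2 r = ∑ r, (x.1 (r - 1) + x.2 (r - 1)) := by
    rw [← sum_add_distrib]
    refine sum_congr rfl fun r _ => ?_
    have := hx r
    rw [tensPhi_of_inBmin hx]
    omega
  rw [sum_add_distrib, hshift x.1, hshift x.2] at h
  omega

theorem inBmin_and_tensPhi_eq_of_tensEps_le {x y : (Fin n → ℕ) × (Fin n → ℕ)} (hy : InBmin y)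
    (hsum : ∑ i, x.1 i = ∑ i, y.1 i) (hle : ∀ r, tensEps r x ≤ tensPhi r y) :
    InBmin x ∧ ∀ r, tensPhi r y = tensEps r x := by
  have hlow : ∑ r, x.1 r ≤ ∑ r, tensEps r x := sum_le_sum fun r _ => le_tensEps r x
  have hup : ∑ r, tensEps r x ≤ ∑ r, tensPhi r y := sum_le_sum fun r _ => hle r
  rw [sum_tensPhi_of_inBmin hy, ← hsum] at hup
  have hε : ∀ r, tensEps r x = x.1 r := fun r =>
    ((sum_eq_sum_iff_of_le fun r _ => le_tensEps r x).mp (by omega) r (mem_univ r)).symm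
  have hφ : ∀ r, tensPhi r y = tensEps r x := fun r =>
    ((sum_eq_sum_iff_of_le fun r _ => hle r).mp
      (by rw [sum_tensPhi_of_inBmin hy]; omega) r (mem_univ r)).symm
  exact ⟨inBmin_of_tensEps_eq hε, hφ⟩

def MinLinkedAt (p : ℕ → (Fin n → ℕ) × (Fin n → ℕ)) (j : ℕ) : Prop :=
  InBmin (p j) ∧ ∀ r, tensPhi r (p (j + 1)) = tensEps r (p j)

open Fin.NatCast Fin.CommRing in
theorem minLinkedAt_prefA (lam mu : Fin n → ℕ) (j : ℕ) :
    MinLinkedAt (prefA n lam mu) j := by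
  have hmin (j : ℕ) : InBmin (prefA n lam mu j) := fun i => by
    simp only [prefA]
    rw [show i - 1 + ((2 * j : ℕ) : Fin n) = i + ((2 * j : ℕ) : Fin n) - 1 by ring]
    exact Nat.le_add_left _ _
  refine ⟨hmin j, fun r => ?_⟩
  rw [tensPhi_of_inBmin (hmin _), tensEps_of_inBmin (hmin _)]
  simp only [prefA]
  push_cast
  rw [show r - 1 + ((j : Fin n) + 1) = r + j by ring,
    show r - 1 + 2 * ((j : Fin n) + 1) = r + 2 * j + 1 by ring,
    show r + 2 * (j : Fin n) + 1 - 1 = r + 2 * j by ring,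
    show r + 2 * ((j : Fin n) + 1) - 1 = r + 2 * j + 1 by ring]
  omega

theorem minLinkedAt_of_forall_gt {p : ℕ → (Fin n → ℕ) × (Fin n → ℕ)} {l : ℕ}
    (hsum : ∀ j, ∑ i, (p j).1 i = l)
    (hhw : ∀ r, ¬ ∃ q, EStep (tensErA r) (tensEps r) (tensPhi r) p q)
    {j : ℕ} (ih : ∀ k, j < k → MinLinkedAt p k) : MinLinkedAt p j := by
  have hle : ∀ r, tensEps r (p j) ≤ tensPhi r (p (j + 1)) := fun r =>
    eps_le_phi_succ_of_not_exists_eStep (fun _ => tensEps_eq_zero_of_tensErA_eq_none)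
      (hhw r) fun k hk => (ih k hk).2 r
  exact inBmin_and_tensPhi_eq_of_tensEps_le (ih (j + 1) j.lt_succ_self).1
    (by rw [hsum, hsum]) hle

end TypeA

theorem stmt19_general (n l m : ℕ) [NeZero n]
    (lam mu : Fin n → ℕ)
    (p : ℕ → (Fin n → ℕ) × (Fin n → ℕ))
    -- p(j) ∈ B^{1,l}⊗B^{1,m}
    (hmem : ∀ j, (∑ i, (p j).1 i) = l ∧ (∑ i, (p j).2 i) = m)
    -- p ∈ 𝒫(p^{(λ,μ)}, B)
    (hev : ∃ N, ∀ k, N ≤ k → p k = prefA n lam mu k)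
    -- p is a highest weight element: ẽ_r p = 0 for all r
    (hhw : ∀ r : Fin n, ¬ ∃ q,
      EStep (tensE (erA n r) (erA n r) (fun x => x (r - 1)) (fun y => y r))
        (fun b => max (b.1 r) (b.1 r + b.2 r - b.1 (r - 1)))
        (fun b => max (b.2 (r - 1)) (b.1 (r - 1) + b.2 (r - 1) - b.2 r))
        p q) :
    ∀ (j : ℕ) (i : Fin n),
      ((p j).2 i ≤ (p j).1 (i - 1)) ∧
      (1 ≤ j → (p j).1 (i - 1) + (p j).2 (i - 1) - (p j).2 i
        = (p (j - 1)).1 i) := by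
  obtain ⟨N, hN⟩ := hev
  have hlinked : ∀ j, MinLinkedAt p j := by
    refine Nat.strong_decreasing_induction ⟨N, fun k hk => ?_⟩
      fun j ih => minLinkedAt_of_forall_gt (fun j => (hmem j).1) hhw ih
    have hp : ∀ k', k ≤ k' → p k' = prefA n lam mu k' := fun k' hk' => hN k' (by omega)
    simpa only [MinLinkedAt, hp k le_rfl, hp (k + 1) k.le_succ] using minLinkedAt_prefA lam mu k
  intro j i
  refine ⟨(hlinked j).1 i, fun hj => ?_⟩
  obtain ⟨k, rfl⟩ := Nat.exists_eq_add_of_le' hj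
  rw [Nat.add_sub_cancel, ← tensPhi_of_inBmin (hlinked (k + 1)).1, (hlinked k).2,
    tensEps_of_inBmin (hlinked k).1]

/-- in the `A_{n−1}^{(1)}` case `B = B^{1,l}⊗B^{1,m}` (`l ≥ m`),
if `p` is a highest weight path in `𝒫(p^{(λ,μ)}, B)` with
`p(j) = (a^{(j)}_i)⊗(b^{(j)}_i)`, then for all `i, j`:
`a^{(j)}_{i−1} ≥ b^{(j)}_i` and
`a^{(j)}_{i−1} + b^{(j)}_{i−1} − b^{(j)}_i = a^{(j−1)}_i`
(i.e. `φ_i(p(j)) = ε_i(p(j−1))`). -/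
theorem stmt19 (n l m : ℕ) [NeZero n] (hn : 2 ≤ n) (hlm : m ≤ l)
    (lam mu : Fin n → ℕ)
    (hlam : (∑ i, lam i) = l - m) (hmu : (∑ i, mu i) = m)
    (p : ℕ → (Fin n → ℕ) × (Fin n → ℕ))
    -- p(j) ∈ B^{1,l}⊗B^{1,m}
    (hmem : ∀ j, (∑ i, (p j).1 i) = l ∧ (∑ i, (p j).2 i) = m)
    -- p ∈ 𝒫(p^{(λ,μ)}, B)
    (hev : ∃ N, ∀ k, N ≤ k → p k = prefA n lam mu k)
    -- p is a highest weight element: ẽ_r p = 0 for all r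
    (hhw : ∀ r : Fin n, ¬ ∃ q,
      EStep (tensE (erA n r) (erA n r) (fun x => x (r - 1)) (fun y => y r))
        (fun b => max (b.1 r) (b.1 r + b.2 r - b.1 (r - 1)))
        (fun b => max (b.2 (r - 1)) (b.1 (r - 1) + b.2 (r - 1) - b.2 r))
        p q) :
    ∀ (j : ℕ) (i : Fin n),
      ((p j).2 i ≤ (p j).1 (i - 1)) ∧
      (1 ≤ j → (p j).1 (i - 1) + (p j).2 (i - 1) - (p j).2 i
        = (p (j - 1)).1 i) :=
  stmt19_general n l m lam mu p hmem hev hhw
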